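/- Let α be a composition of length n, λ a partition, and k ≥ 0 with λ_1 − k ≤ n. If T is a semistandard Young tableau of shape λ ⊕ Δ_α with lattice reading word such that the first row of λ contains at most k entries equal to 1, then the tableau of shape S(λ,α;k) obtained from T by shifting the foundation λ to the right (keeping all entries) is also a semistandard Young tableau with lattice reading word. -/

import Mathlib

open Finset

namespace SchurStair

/-- A diagram is a finite set of cells `(row, column)`, with row `0` at the top. -/
abbrev Diagram := Finset (ℕ × ℕ)

/-- `T` is a semistandard filling of `D`: positive entries, rows weakly increase
left to right, columns strictly increase top to bottom. -/
def IsSSYT (D : Diagram) (T : ℕ × ℕ → ℕ) : Prop :=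
  (∀ x ∈ D, 1 ≤ T x) ∧
  (∀ i j : ℕ, (i, j) ∈ D → (i, j + 1) ∈ D → T (i, j) ≤ T (i, j + 1)) ∧
  (∀ i j : ℕ, (i, j) ∈ D → (i + 1, j) ∈ D → T (i, j) < T (i + 1, j))

/-- The content of a filling: `content D T v` is the number of cells of `D`
with entry `v`. -/
def content (D : Diagram) (T : ℕ × ℕ → ℕ) : ℕ → ℕ :=
  fun v => (D.filter fun x => T x = v).card

/-- `y` is read at or before `x` in the reading word
(rows right to left, proceeding from the top row to the bottom). -/
def ReadBefore (x y : ℕ × ℕ) : Prop :=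
  y.1 < x.1 ∨ (y.1 = x.1 ∧ x.2 ≤ y.2)

open Classical in
/-- The reading word of `T` on `D` is lattice: in every prefix, the number of
`v+1`'s read is at least the number of `v+2`'s read. -/
def IsLattice (D : Diagram) (T : ℕ × ℕ → ℕ) : Prop :=
  ∀ x ∈ D, ∀ v : ℕ,
    (D.filter fun y => ReadBefore x y ∧ T y = v + 2).card ≤
      (D.filter fun y => ReadBefore x y ∧ T y = v + 1).card

/-- The semistandard Young tableaux of shape `D` and content `c`
(normalized to be `0` off `D`). -/
def SSYTs (D : Diagram) (c : ℕ → ℕ) : Set ((ℕ × ℕ) → ℕ) :=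
  {T | IsSSYT D T ∧ (∀ x ∉ D, T x = 0) ∧ content D T = c}

/-- The SSYT of shape `D` and content `c` whose reading word is lattice. -/
def LatticeSSYTs (D : Diagram) (c : ℕ → ℕ) : Set ((ℕ × ℕ) → ℕ) :=
  {T | T ∈ SSYTs D c ∧ IsLattice D T}

/-- The coefficient of the monomial `x^c` in the skew Schur function `s_D`. -/
noncomputable def ssytCount (D : Diagram) (c : ℕ → ℕ) : ℕ := (SSYTs D c).ncard

/-- By the Littlewood–Richardson rule, the coefficient of the Schur function
`s_c` in the Schur expansion of `s_D`. -/
noncomputable def lrCount (D : Diagram) (c : ℕ → ℕ) : ℕ := (LatticeSSYTs D c).ncard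

/-- `s_{D₁} - s_{D₂}` is Schur-positive (phrased via the LR rule). -/
def SchurPos (D₁ D₂ : Diagram) : Prop := ∀ c : ℕ → ℕ, lrCount D₂ c ≤ lrCount D₁ c

/-- `α` encodes a composition `(α_1, …, α_n)`: the 1-based part `α_i` is `α (i-1)`. -/
def IsComposition (n : ℕ) (α : ℕ → ℕ) : Prop := ∀ i < n, 0 < α i

/-- Height of column `c` (0-based) of the staircase `δ_α`. -/
def stairColHt (n : ℕ) (α : ℕ → ℕ) (c : ℕ) : ℕ := ∑ i ∈ Finset.Ico c n, α i

/-- The number of rows `|α|` of the fat staircases `δ_α`, `Δ_α`. -/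
def stairLen (n : ℕ) (α : ℕ → ℕ) : ℕ := ∑ i ∈ Finset.range n, α i

/-- Row lengths of the staircase partition `δ_α = (n^{α_n}, …, 1^{α_1})`. -/
def deltaPart (n : ℕ) (α : ℕ → ℕ) : ℕ → ℕ :=
  fun r => ((Finset.range n).filter fun c => r < stairColHt n α c).card

/-- The rotated fat staircase `Δ_α`, inside its `|α| × n` bounding box. -/
def deltaUp (n : ℕ) (α : ℕ → ℕ) : Diagram :=
  (Finset.range (stairLen n α) ×ˢ Finset.range n).filter fun x =>
    stairLen n α ≤ x.1 + stairColHt n α (n - 1 - x.2)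

/-- Cells of a partition `lam` (with at most `m` parts), top-left justified. -/
def partCells (m : ℕ) (lam : ℕ → ℕ) : Diagram :=
  (Finset.range m ×ˢ Finset.range (lam 0)).filter fun x => x.2 < lam x.1

/-- Translate a diagram down by `dr` and right by `dc`. -/
def shiftD (D : Diagram) (dr dc : ℕ) : Diagram := D.image fun x => (x.1 + dr, x.2 + dc)

/-- The fat staircase with bad foundation `S(λ, α; k)`: the foundation `lam`
(at most `m` parts) is placed immediately below `Δ_α`, its first row beginning
one box below and `k` boxes left of the bottom-left box of `Δ_α`, so that
the rows overlap in `lam 0 - k` column positions. -/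
def shapeS (n : ℕ) (α : ℕ → ℕ) (m : ℕ) (lam : ℕ → ℕ) (k : ℕ) : Diagram :=
  shiftD (deltaUp n α) 0 k ∪ shiftD (partCells m lam) (stairLen n α) 0

/-- The direct sum `λ ⊕ Δ_α` (disconnected, `λ` to the lower left). -/
def dsumS (n : ℕ) (α : ℕ → ℕ) (m : ℕ) (lam : ℕ → ℕ) : Diagram :=
  shiftD (deltaUp n α) 0 (lam 0) ∪ shiftD (partCells m lam) (stairLen n α) 0

/-- The hook `(a, 1^{l-1})` as a partition. -/
def hookPart (a l : ℕ) : ℕ → ℕ :=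
  fun i => if i = 0 then a else if i < l then 1 else 0

/-- The set `R_{α,k}` of possible first-row foundation entries:
`{1 + α_n + ⋯ + α_{n+1-j} : 1 ≤ j ≤ n}`, together with `1` when `k > 0`. -/
def Rfin (n : ℕ) (α : ℕ → ℕ) (k : ℕ) : Finset ℕ :=
  ((Finset.Icc 1 n).image fun j => 1 + ∑ i ∈ Finset.Ico (n - j) n, α i) ∪
    (if 0 < k then {1} else ∅)

/-- The complement `p^c` of a partition `p` in the rectangle `(b^a)`
(`a` rows of width `b`): the 180° rotation of `(b^a) / p`. -/
def complementPart (a b : ℕ) (p : ℕ → ℕ) : ℕ → ℕ :=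
  fun i => if i < a then b - p (a - 1 - i) else 0

/-- Cells of the skew diagram `p / q`, where `p` has at most `a` parts. -/
def skewCells (a : ℕ) (p q : ℕ → ℕ) : Diagram :=
  (Finset.range a ×ˢ Finset.range (p 0)).filter fun x => q x.1 ≤ x.2 ∧ x.2 < p x.1

/-- Extend a tuple `Fin a → Fin (b+1)` to a function `ℕ → ℕ` (zero beyond `a`);
used to enumerate the partitions contained in the rectangle `(b^a)`. -/
def extFun (a b : ℕ) (f : Fin a → Fin (b + 1)) : ℕ → ℕ :=
  fun i => if h : i < a then (f ⟨i, h⟩ : ℕ) else 0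

/-- The content function of a partition `p`: the entry `v ≥ 1` occurs `p (v-1)` times. -/
def partContent (p : ℕ → ℕ) : ℕ → ℕ := fun v => if v = 0 then 0 else p (v - 1)

open Classical in
/-- The Littlewood–Richardson coefficient `c^ν_{κσ}` (with `ν` a partition of at
most `a` parts): the number of lattice SSYT of shape `ν/κ` and content `σ`. -/
noncomputable def lrCoeff (a : ℕ) (ν κ : ℕ → ℕ) (σ : ℕ → ℕ) : ℕ :=
  if ∀ i, κ i ≤ ν i then lrCount (skewCells a ν κ) σ else 0

open Classical in
/-- The truncated complement, in the rectangle `(b^a)`, of the symmetric function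
with Schur coefficient family `F`: `c(∑_ν F(ν) s_ν) = ∑_{ν ⊆ (b^a)} F(ν) s_{ν^c}`,
expressed as a monomial-coefficient (content-counting) function. -/
noncomputable def truncComplement (a b : ℕ) (F : (ℕ → ℕ) → ℕ) : (ℕ → ℕ) → ℕ :=
  fun c => ∑ ν : Fin a → Fin (b + 1),
    if Antitone (extFun a b ν) then
      F (extFun a b ν) *
        ssytCount (skewCells a (complementPart a b (extFun a b ν)) fun _ => 0) c
    else 0

/-- `D` is a skew diagram: row `i` occupies the columns `g i ≤ j < f i` for
nested partitions `g ⊆ f`. -/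
def IsSkew (D : Diagram) : Prop :=
  ∃ f g : ℕ → ℕ, Antitone f ∧ Antitone g ∧ (∀ i, g i ≤ f i) ∧
    ∀ x : ℕ × ℕ, x ∈ D ↔ g x.1 ≤ x.2 ∧ x.2 < f x.1

/-- One more than the largest row index of `D`. -/
def diagHeight (D : Diagram) : ℕ := D.sup fun x => x.1 + 1

/-- One more than the largest column index of `D`. -/
def diagWidth (D : Diagram) : ℕ := D.sup fun x => x.2 + 1

/-- The direct sum `D₁ ⊕ D₂`: `D₂` placed above and to the right of `D₁`. -/
def directSum (D₁ D₂ : Diagram) : Diagram :=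
  shiftD D₁ (diagHeight D₂) 0 ∪ shiftD D₂ 0 (diagWidth D₁)

/-- The 180° rotation `D°` of a diagram (within its bounding box). -/
def rotateD (D : Diagram) : Diagram :=
  D.image fun x => (diagHeight D - 1 - x.1, diagWidth D - 1 - x.2)

end SchurStair

/-!
In a lattice filling of `λ ⊕ Δ_α` the staircase `Δ_α`, which is read first, is forced: every
entry is the depth of its cell in its column, so after reading `Δ_α` the word contains one `w`
for each column of height at least `w`. Since the column heights are distinct, the lattice
condition at the first row of `λ` makes its entries beyond the (at most `k`) ones strictly
increasing, each one more than the height of some column. Hence the `d`-th of them exceeds the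
height of the `d`-th column of `Δ_α`, which is the entry directly above it after the shift.
The shift changes neither the other row and column conditions nor the reading word.
-/

theorem Monotone.apply_le_of_mem_range {g a : ℕ → ℕ} (hg : Monotone g) {N : ℕ}
    (ha : ∀ d, d + 1 < N → a d < a (d + 1)) (hrange : ∀ d < N, a d ∈ Set.range g) {d : ℕ}
    (hd : d < N) : g d ≤ a d := by
  suffices h : ∀ d < N, ∃ c, d ≤ c ∧ g c = a d by
    obtain ⟨c, hdc, hc⟩ := h d hd
    exact hc ▸ hg hdc
  intro d hd
  induction d with
  | zero =>
    obtain ⟨c, hc⟩ := hrange 0 hd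
    exact ⟨c, Nat.zero_le _, hc⟩
  | succ d ih =>
    obtain ⟨c, hdc, hc⟩ := ih (by omega)
    obtain ⟨c', hc'⟩ := hrange (d + 1) hd
    refine ⟨c', ?_, hc'⟩
    by_contra! h
    have := hg (show c' ≤ c by omega)
    have := ha d hd
    omega

namespace SchurStair

/-- Columns of `Δ_α` are indexed from the left, those of `δ_α` (`stairColHt`) from the right. -/
def deltaUpColHt (n : ℕ) (α : ℕ → ℕ) (c : ℕ) : ℕ := stairColHt n α (n - 1 - c)

/-- The shape of both `λ ⊕ Δ_α` (`off = λ_1`) and `S(λ,α;k)` (`off = k`). -/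
def stairStack (n : ℕ) (α : ℕ → ℕ) (off : ℕ) (P : Diagram) : Diagram :=
  shiftD (deltaUp n α) 0 off ∪ shiftD P (stairLen n α) 0

section Geometry

variable {n : ℕ} {α : ℕ → ℕ} {off : ℕ} {P : Diagram}

theorem deltaUpColHt_le_stairLen (c : ℕ) : deltaUpColHt n α c ≤ stairLen n α := by
  rw [deltaUpColHt, stairColHt, stairLen, Finset.range_eq_Ico]
  exact Finset.sum_le_sum_of_subset (Finset.Ico_subset_Ico_left (Nat.zero_le _))

theorem deltaUpColHt_mono : Monotone (deltaUpColHt n α) := fun _ _ h =>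
  Finset.sum_le_sum_of_subset (Finset.Ico_subset_Ico_left (Nat.sub_le_sub_left h _))

theorem deltaUpColHt_strictMonoOn (hα : IsComposition n α) :
    StrictMonoOn (deltaUpColHt n α) (Set.Iio n) := by
  intro c₁ _ c₂ hc₂ h
  rw [Set.mem_Iio] at hc₂
  rw [deltaUpColHt, deltaUpColHt, stairColHt, stairColHt,
    ← Finset.sum_Ico_consecutive _ (show n - 1 - c₂ ≤ n - 1 - c₁ by omega)
      (show n - 1 - c₁ ≤ n by omega)]
  have hpos : 0 < α (n - 1 - c₂) := hα _ (by omega)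
  have hle : α (n - 1 - c₂) ≤ ∑ i ∈ Finset.Ico (n - 1 - c₂) (n - 1 - c₁), α i :=
    Finset.single_le_sum (fun _ _ => Nat.zero_le _) (Finset.mem_Ico.2 ⟨le_rfl, by omega⟩)
  omega

theorem card_filter_deltaUpColHt_eq_le_one (hα : IsComposition n α) (w : ℕ) :
    ((Finset.range n).filter fun c => deltaUpColHt n α c = w).card ≤ 1 := by
  refine Finset.card_le_one.2 fun a ha b hb => ?_
  simp only [Finset.mem_filter, Finset.mem_range] at ha hb
  exact (deltaUpColHt_strictMonoOn hα).injOn ha.1 hb.1 (ha.2.trans hb.2.symm)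

theorem mem_deltaUp {r c : ℕ} :
    (r, c) ∈ deltaUp n α ↔
      r < stairLen n α ∧ c < n ∧ stairLen n α ≤ r + deltaUpColHt n α c := by
  simp [deltaUp, deltaUpColHt, and_assoc]

theorem mem_shiftD {D : Diagram} {dr dc : ℕ} {x : ℕ × ℕ} :
    x ∈ shiftD D dr dc ↔ dr ≤ x.1 ∧ dc ≤ x.2 ∧ (x.1 - dr, x.2 - dc) ∈ D := by
  rw [shiftD, Finset.mem_image]
  constructor
  · rintro ⟨y, hy, rfl⟩
    simpa using hy
  · rintro ⟨h₁, h₂, h₃⟩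
    exact ⟨_, h₃, Prod.ext (by simp; omega) (by simp; omega)⟩

theorem mem_shiftD_deltaUp {x : ℕ × ℕ} :
    x ∈ shiftD (deltaUp n α) 0 off ↔ ∃ r c, (r, c) ∈ deltaUp n α ∧ (r, off + c) = x := by
  simp only [shiftD, Finset.mem_image, Prod.exists, add_zero, add_comm _ off]

theorem fst_lt_of_mem_shiftD_deltaUp {x : ℕ × ℕ} (hx : x ∈ shiftD (deltaUp n α) 0 off) :
    x.1 < stairLen n α := by
  obtain ⟨r, c, h, rfl⟩ := mem_shiftD_deltaUp.1 hx
  exact (mem_deltaUp.1 h).1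

theorem mem_stairStack_of_lt {x : ℕ × ℕ} (hx : x.1 < stairLen n α) :
    x ∈ stairStack n α off P ↔ x ∈ shiftD (deltaUp n α) 0 off := by
  rw [stairStack, Finset.mem_union, or_iff_left_iff_imp, mem_shiftD]
  omega

theorem mem_stairStack_of_le {x : ℕ × ℕ} (hx : stairLen n α ≤ x.1) :
    x ∈ stairStack n α off P ↔ (x.1 - stairLen n α, x.2) ∈ P := by
  simp [stairStack, mem_shiftD, mem_deltaUp, not_lt.2 hx, hx]

theorem mk_add_mem_stairStack {r c : ℕ} (h : (r, c) ∈ deltaUp n α) :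
    (r, off + c) ∈ stairStack n α off P :=
  Finset.mem_union_left _ (mem_shiftD_deltaUp.2 ⟨r, c, h, rfl⟩)

theorem mk_zero_mem_partCells {m : ℕ} {lam : ℕ → ℕ} {j : ℕ} :
    (0, j) ∈ partCells m lam ↔ 0 < m ∧ j < lam 0 := by
  simp [partCells]

end Geometry

section StairFilling

variable {n : ℕ} {α : ℕ → ℕ} {off : ℕ} {P : Diagram} {T : ℕ × ℕ → ℕ}

theorem IsSSYT.row_mono {D : Diagram} (hT : IsSSYT D T) {r j₁ j₂ : ℕ} (h : j₁ ≤ j₂)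
    (hD : ∀ j, j₁ ≤ j → j ≤ j₂ → (r, j) ∈ D) : T (r, j₁) ≤ T (r, j₂) := by
  induction j₂, h using Nat.le_induction with
  | base => exact le_rfl
  | succ j₂ h ih =>
    exact (ih fun j hj hj₂ => hD j hj (by omega)).trans
      (hT.2.1 r j₂ (hD j₂ h (by omega)) (hD (j₂ + 1) (by omega) le_rfl))

theorem IsSSYT.stair_row_mono (hT : IsSSYT (stairStack n α off P) T) {r c c' : ℕ}
    (hrc : (r, c) ∈ deltaUp n α) (hc : c ≤ c') (hc' : c' < n) :
    T (r, off + c) ≤ T (r, off + c') := by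
  obtain ⟨hr, -, hrL⟩ := mem_deltaUp.1 hrc
  refine hT.row_mono (by omega) fun j hj hj' => ?_
  obtain ⟨e, rfl⟩ := Nat.exists_eq_add_of_le ((Nat.le_add_right off c).trans hj)
  have := deltaUpColHt_mono (n := n) (α := α) (show c ≤ e by omega)
  exact mk_add_mem_stairStack (mem_deltaUp.2 ⟨hr, by omega, by omega⟩)

theorem IsSSYT.stair_entry_ge (hT : IsSSYT (stairStack n α off P) T) {r c : ℕ}
    (hrc : (r, c) ∈ deltaUp n α) :
    r + deltaUpColHt n α c + 1 - stairLen n α ≤ T (r, off + c) := by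
  have hpos := hT.1 _ (mk_add_mem_stairStack hrc)
  induction r with
  | zero => have := deltaUpColHt_le_stairLen (n := n) (α := α) c; omega
  | succ r ih =>
    by_cases hup : (r, c) ∈ deltaUp n α
    · have hlt := hT.2.2 r (off + c) (mk_add_mem_stairStack hup)
        (mk_add_mem_stairStack hrc)
      have := ih hup (hT.1 _ (mk_add_mem_stairStack hup))
      omega
    · rw [mem_deltaUp] at hup hrc
      omega

theorem IsSSYT.stair_below_of_earlier (hT : IsSSYT (stairStack n α off P) T) {r c : ℕ}
    (hrc : (r, c) ∈ deltaUp n α)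
    (ih : ∀ r' c', (r', c') ∈ deltaUp n α → (r' < r ∨ r' = r ∧ c < c') →
      T (r', off + c') = r' + deltaUpColHt n α c' + 1 - stairLen n α)
    (hgt : r + deltaUpColHt n α c + 1 - stairLen n α < T (r, off + c))
    {y : ℕ × ℕ} (hy : y ∈ stairStack n α off P) (hyR : ReadBefore (r, off + c) y)
    (hyv : T y + 1 = T (r, off + c)) :
    (y.1 + 1, y.2) ∈ stairStack n α off P ∧ ReadBefore (r, off + c) (y.1 + 1, y.2) ∧
      T (y.1 + 1, y.2) = T (r, off + c) ∧ (y.1 + 1, y.2) ≠ (r, off + c) := by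
  obtain ⟨hr, -, hrL⟩ := mem_deltaUp.1 hrc
  have hy1 : y.1 < stairLen n α := by simp only [ReadBefore] at hyR; omega
  obtain ⟨r', c', hrc', rfl⟩ := mem_shiftD_deltaUp.1 ((mem_stairStack_of_lt hy1).1 hy)
  simp only [ReadBefore] at hyR ⊢
  obtain ⟨-, hc'n, hr'L⟩ := mem_deltaUp.1 hrc'
  have hr'r : r' < r := by
    rcases hyR with h | ⟨rfl, h⟩
    · exact h
    · have := hT.stair_row_mono hrc (show c ≤ c' by omega) hc'n
      omega
  have hyval := ih r' c' hrc' (Or.inl hr'r)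
  have hbc : (r' + 1, c') ∈ deltaUp n α := mem_deltaUp.2 ⟨by omega, hc'n, by omega⟩
  have horder : r' + 1 < r ∨ r' + 1 = r ∧ c < c' := by
    by_contra! h
    have := deltaUpColHt_mono (n := n) (α := α) (h.2 (by omega))
    omega
  have hbval := ih _ _ hbc horder
  refine ⟨mk_add_mem_stairStack hbc, by omega, by omega, fun h => ?_⟩
  simp only [Prod.ext_iff] at h
  omega

/-- If the entry `v` exceeded the depth, moving down one cell would inject the `v - 1`s read
so far into the `v`s read before the current cell, against the lattice condition. -/
theorem IsLattice.stair_entry_eq_of_earlier (hT : IsSSYT (stairStack n α off P) T)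
    (hlat : IsLattice (stairStack n α off P) T) {r c : ℕ} (hrc : (r, c) ∈ deltaUp n α)
    (ih : ∀ r' c', (r', c') ∈ deltaUp n α → (r' < r ∨ r' = r ∧ c < c') →
      T (r', off + c') = r' + deltaUpColHt n α c' + 1 - stairLen n α) :
    T (r, off + c) = r + deltaUpColHt n α c + 1 - stairLen n α := by
  classical
  have hx : (r, off + c) ∈ stairStack n α off P := mk_add_mem_stairStack hrc
  have hge := hT.stair_entry_ge hrc
  have hrL := (mem_deltaUp.1 hrc).2.2
  by_contra hne
  set v := T (r, off + c)
  set A := (stairStack n α off P).filter fun y => ReadBefore (r, off + c) y ∧ T y = v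
  set B := (stairStack n α off P).filter fun y => ReadBefore (r, off + c) y ∧ T y = v - 1
  have hAB : A.card ≤ B.card := by
    have := hlat _ hx (v - 2)
    rwa [show v - 2 + 2 = v by omega, show v - 2 + 1 = v - 1 by omega] at this
  have hxA : (r, off + c) ∈ A := Finset.mem_filter.2 ⟨hx, Or.inr ⟨rfl, le_rfl⟩, rfl⟩
  have hBA : B.card ≤ (A.erase (r, off + c)).card := by
    refine Finset.card_le_card_of_injOn (fun y => (y.1 + 1, y.2)) (fun y hy => ?_)
      fun y _ y' _ h => by simp only [Prod.ext_iff] at h ⊢; omega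
    obtain ⟨hyD, hyR, hyv⟩ := Finset.mem_filter.1 hy
    obtain ⟨hmem, hR, hval, hne⟩ :=
      hT.stair_below_of_earlier hrc ih (by omega) hyD hyR (by omega)
    exact Finset.mem_erase.2 ⟨hne, Finset.mem_filter.2 ⟨hmem, hR, hval⟩⟩
  rw [Finset.card_erase_of_mem hxA] at hBA
  have := Finset.card_pos.2 ⟨_, hxA⟩
  omega

/-- Each entry of `Δ_α` is the depth of its cell in its column. -/
theorem IsLattice.stair_entry_eq (hT : IsSSYT (stairStack n α off P) T)
    (hlat : IsLattice (stairStack n α off P) T) {r c : ℕ} (hrc : (r, c) ∈ deltaUp n α) :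
    T (r, off + c) = r + deltaUpColHt n α c + 1 - stairLen n α := by
  induction hN : r * (n + 1) + (n - c) using Nat.strong_induction_on generalizing r c with
  | _ N ih =>
    refine hlat.stair_entry_eq_of_earlier hT hrc fun r' c' hrc' hlt => ih _ ?_ hrc' rfl
    subst hN
    have hc' := (mem_deltaUp.1 hrc').2.1
    rcases hlt with h | ⟨rfl, h⟩
    · have := Nat.mul_le_mul_right (n + 1) (Nat.succ_le_of_lt h)
      rw [Nat.succ_mul] at this
      omega
    · omega

end StairFilling

section Foundation

variable {n : ℕ} {α : ℕ → ℕ} {m : ℕ} {lam : ℕ → ℕ} {T : ℕ × ℕ → ℕ}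

/-- Each column of height at least `w` carries exactly one `w`. -/
theorem IsLattice.card_filter_stair_eq {off : ℕ} {P : Diagram}
    (hT : IsSSYT (stairStack n α off P) T) (hlat : IsLattice (stairStack n α off P) T)
    {w : ℕ} (hw : 1 ≤ w) :
    ((shiftD (deltaUp n α) 0 off).filter fun y => T y = w).card =
      ((Finset.range n).filter fun c => w ≤ deltaUpColHt n α c).card := by
  refine Finset.card_nbij' (fun y => y.2 - off)
    (fun c => (stairLen n α + w - 1 - deltaUpColHt n α c, off + c)) ?_ ?_ ?_ ?_
  · intro y hy
    obtain ⟨hyD, hyw⟩ := Finset.mem_filter.1 hy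
    obtain ⟨r, c, hrc, rfl⟩ := mem_shiftD_deltaUp.1 hyD
    have := hlat.stair_entry_eq hT hrc
    have := mem_deltaUp.1 hrc
    simp only [Finset.coe_filter, Finset.mem_range, Set.mem_ofPred_eq, Nat.add_sub_cancel_left]
    omega
  · intro c hc
    simp only [Finset.coe_filter, Finset.mem_range, Set.mem_ofPred_eq] at hc
    have := deltaUpColHt_le_stairLen (n := n) (α := α) c
    have hrc : (stairLen n α + w - 1 - deltaUpColHt n α c, c) ∈ deltaUp n α :=
      mem_deltaUp.2 ⟨by omega, hc.1, by omega⟩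
    have := hlat.stair_entry_eq hT hrc
    simp only [Finset.coe_filter, Set.mem_ofPred_eq]
    exact ⟨mem_shiftD_deltaUp.2 ⟨_, _, hrc, rfl⟩, by omega⟩
  · intro y hy
    obtain ⟨hyD, hyw⟩ := Finset.mem_filter.1 hy
    obtain ⟨r, c, hrc, rfl⟩ := mem_shiftD_deltaUp.1 hyD
    have := hlat.stair_entry_eq hT hrc
    have := mem_deltaUp.1 hrc
    simp only [Prod.mk.injEq, Nat.add_sub_cancel_left, and_true]
    omega
  · intro c _
    simp

theorem mk_stairLen_mem_dsumS (hm : 0 < m) {j : ℕ} :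
    (stairLen n α, j) ∈ dsumS n α m lam ↔ j < lam 0 := by
  rw [dsumS, ← stairStack, mem_stairStack_of_le le_rfl, Nat.sub_self, mk_zero_mem_partCells]
  exact and_iff_right hm

theorem IsSSYT.foundation_row_mono (hT : IsSSYT (dsumS n α m lam) T) (hm : 0 < m)
    {j₁ j₂ : ℕ} (h : j₁ ≤ j₂) (hj₂ : j₂ < lam 0) :
    T (stairLen n α, j₁) ≤ T (stairLen n α, j₂) :=
  hT.row_mono h fun _ _ hj => (mk_stairLen_mem_dsumS hm).2 (by omega)

open Classical in
theorem card_filter_readBefore_foundation (hm : 0 < m) (j w : ℕ) :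
    ((dsumS n α m lam).filter fun y => ReadBefore (stairLen n α, j) y ∧ T y = w).card =
      ((shiftD (deltaUp n α) 0 (lam 0)).filter fun y => T y = w).card +
        ((Finset.Ico j (lam 0)).filter fun j' => T (stairLen n α, j') = w).card := by
  rw [← Finset.card_image_of_injective ((Finset.Ico j (lam 0)).filter _)
      (Prod.mk_right_injective (stairLen n α)),
    ← Finset.card_union_of_disjoint]
  · congr 1
    ext ⟨a, b⟩
    rw [Finset.mem_filter]
    simp only [Finset.mem_union, Finset.mem_filter, Finset.mem_image, Finset.mem_Ico,
      ReadBefore, Prod.mk.injEq]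
    constructor
    · rintro ⟨hD, ha | ⟨rfl, hjb⟩, hw⟩
      · exact Or.inl ⟨(mem_stairStack_of_lt (x := (a, b)) ha).1 hD, hw⟩
      · exact Or.inr ⟨b, ⟨⟨hjb, (mk_stairLen_mem_dsumS hm).1 hD⟩, hw⟩, rfl, rfl⟩
    · rintro (⟨hΔ, hw⟩ | ⟨b, ⟨⟨hjb, hb⟩, hw⟩, rfl, rfl⟩)
      · exact ⟨Finset.mem_union_left _ hΔ, Or.inl (fst_lt_of_mem_shiftD_deltaUp hΔ), hw⟩
      · exact ⟨(mk_stairLen_mem_dsumS hm).2 hb, Or.inr ⟨rfl, hjb⟩, hw⟩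
  · rw [Finset.disjoint_left]
    rintro x hx hx'
    obtain ⟨j', -, rfl⟩ := Finset.mem_image.1 hx'
    exact lt_irrefl _ (fst_lt_of_mem_shiftD_deltaUp (Finset.mem_filter.1 hx).1)

theorem IsSSYT.two_le_foundation_entry (hT : IsSSYT (dsumS n α m lam) T) (hm : 0 < m) {k : ℕ}
    (hones : ((Finset.range (lam 0)).filter fun j => T (stairLen n α, j) = 1).card ≤ k)
    {j : ℕ} (hkj : k ≤ j) (hj : j < lam 0) : 2 ≤ T (stairLen n α, j) := by
  by_contra! h
  have hsub : Finset.range (j + 1) ⊆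
      (Finset.range (lam 0)).filter fun j' => T (stairLen n α, j') = 1 := by
    intro j' hj'
    rw [Finset.mem_range] at hj'
    have := hT.foundation_row_mono hm (show j' ≤ j by omega) hj
    have := hT.1 _ ((mk_stairLen_mem_dsumS hm).2 (show j' < lam 0 by omega))
    exact Finset.mem_filter.2 ⟨Finset.mem_range.2 (by omega), by omega⟩
  have := Finset.card_le_card hsub
  rw [Finset.card_range] at this
  omega

theorem IsLattice.card_foundation_entry_le (hT : IsSSYT (dsumS n α m lam) T)
    (hlat : IsLattice (dsumS n α m lam) T) (hm : 0 < m) {j : ℕ} (hj : j < lam 0)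
    (he : 2 ≤ T (stairLen n α, j)) :
    ((Finset.Ico j (lam 0)).filter fun j' => T (stairLen n α, j') = T (stairLen n α, j)).card ≤
      ((Finset.range n).filter fun c => deltaUpColHt n α c = T (stairLen n α, j) - 1).card := by
  set e := T (stairLen n α, j)
  have hlatx := hlat _ ((mk_stairLen_mem_dsumS hm).2 hj) (e - 2)
  rw [show e - 2 + 2 = e by omega, show e - 2 + 1 = e - 1 by omega,
    card_filter_readBefore_foundation hm, card_filter_readBefore_foundation hm,
    hlat.card_filter_stair_eq hT (by omega), hlat.card_filter_stair_eq hT (by omega)] at hlatx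
  have hnone : ((Finset.Ico j (lam 0)).filter fun j' => T (stairLen n α, j') = e - 1) = ∅ :=
    Finset.filter_eq_empty_iff.2 fun j' hj' => by
      have := hT.foundation_row_mono hm (Finset.mem_Ico.1 hj').1 (Finset.mem_Ico.1 hj').2
      omega
  have hsplit : ((Finset.range n).filter fun c => e - 1 ≤ deltaUpColHt n α c).card =
      ((Finset.range n).filter fun c => e ≤ deltaUpColHt n α c).card +
        ((Finset.range n).filter fun c => deltaUpColHt n α c = e - 1).card := by
    rw [← Finset.card_union_of_disjoint (Finset.disjoint_filter.2 fun c _ h₁ h₂ => by omega),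
      ← Finset.filter_or]
    exact congrArg _ (Finset.filter_congr fun c _ => by omega)
  rw [hnone, Finset.card_empty, hsplit] at hlatx
  omega

theorem IsLattice.foundation_entry_mem_range (hT : IsSSYT (dsumS n α m lam) T)
    (hlat : IsLattice (dsumS n α m lam) T) (hm : 0 < m) {j : ℕ} (hj : j < lam 0)
    (he : 2 ≤ T (stairLen n α, j)) :
    T (stairLen n α, j) - 1 ∈ Set.range (deltaUpColHt n α) := by
  have hpos : 0 < ((Finset.Ico j (lam 0)).filter fun j' =>
      T (stairLen n α, j') = T (stairLen n α, j)).card :=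
    Finset.card_pos.2 ⟨j, Finset.mem_filter.2 ⟨Finset.mem_Ico.2 ⟨le_rfl, hj⟩, rfl⟩⟩
  obtain ⟨c, hc⟩ := Finset.card_pos.1 (hpos.trans_le (hlat.card_foundation_entry_le hT hm hj he))
  exact ⟨c, (Finset.mem_filter.1 hc).2⟩

theorem IsLattice.foundation_entry_lt_succ (hα : IsComposition n α)
    (hT : IsSSYT (dsumS n α m lam) T) (hlat : IsLattice (dsumS n α m lam) T) (hm : 0 < m)
    {j : ℕ} (hj : j + 1 < lam 0) (he : 2 ≤ T (stairLen n α, j)) :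
    T (stairLen n α, j) < T (stairLen n α, j + 1) := by
  refine lt_of_le_of_ne (hT.foundation_row_mono hm (Nat.le_succ j) hj) fun heq => ?_
  have hpair : ({j, j + 1} : Finset ℕ) ⊆ (Finset.Ico j (lam 0)).filter fun j' =>
      T (stairLen n α, j') = T (stairLen n α, j) := by
    intro a ha
    rcases Finset.mem_insert.1 ha with rfl | ha
    · exact Finset.mem_filter.2 ⟨Finset.mem_Ico.2 ⟨le_rfl, by omega⟩, rfl⟩
    · rw [Finset.mem_singleton.1 ha]
      exact Finset.mem_filter.2 ⟨Finset.mem_Ico.2 ⟨by omega, hj⟩, heq.symm⟩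
  have := (Finset.card_le_card hpair).trans <|
    (hlat.card_foundation_entry_le hT hm (by omega) he).trans
      (card_filter_deltaUpColHt_eq_le_one hα _)
  rw [Finset.card_pair (by omega)] at this
  omega

theorem IsLattice.deltaUpColHt_lt_foundation_entry (hα : IsComposition n α)
    (hT : IsSSYT (dsumS n α m lam) T) (hlat : IsLattice (dsumS n α m lam) T) (hm : 0 < m)
    {k : ℕ} (hones : ((Finset.range (lam 0)).filter fun j => T (stairLen n α, j) = 1).card ≤ k)
    {d : ℕ} (hd : k + d < lam 0) : deltaUpColHt n α d < T (stairLen n α, k + d) := by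
  have h₂ : ∀ d, k + d < lam 0 → 2 ≤ T (stairLen n α, k + d) := fun d hd =>
    hT.two_le_foundation_entry hm hones (Nat.le_add_right k d) hd
  have := (deltaUpColHt_mono (n := n) (α := α)).apply_le_of_mem_range
    (a := fun d => T (stairLen n α, k + d) - 1) (N := lam 0 - k)
    (fun d hd => by
      have := hlat.foundation_entry_lt_succ hα hT hm (j := k + d) (by omega) (h₂ d (by omega))
      have := h₂ d (by omega)
      show T (stairLen n α, k + d) - 1 < T (stairLen n α, k + d + 1) - 1
      omega)
    (fun d hd => hlat.foundation_entry_mem_range hT hm (by omega) (h₂ d (by omega)))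
    (show d < lam 0 - k by omega)
  have := h₂ d hd
  omega

end Foundation

theorem IsLattice.of_rowwise_bij {D D' : Diagram} {T T' : ℕ × ℕ → ℕ} (f g : ℕ × ℕ → ℕ × ℕ)
    (hf : ∀ x ∈ D', f x ∈ D) (hg : ∀ y ∈ D, g y ∈ D')
    (hgf : ∀ x ∈ D', g (f x) = x) (hfg : ∀ y ∈ D, f (g y) = y)
    (hrow : ∀ x ∈ D', (f x).1 = x.1)
    (hcol : ∀ x ∈ D', ∀ y ∈ D', x.1 = y.1 → ((f x).2 ≤ (f y).2 ↔ x.2 ≤ y.2))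
    (hT : ∀ x ∈ D', T' x = T (f x)) (hlat : IsLattice D T) : IsLattice D' T' := by
  classical
  intro x hx v
  have hread : ∀ y ∈ D', ReadBefore (f x) (f y) ↔ ReadBefore x y := by
    intro y hy
    simp only [ReadBefore, hrow x hx, hrow y hy]
    exact or_congr_right (and_congr_right fun h => hcol x hx y hy h.symm)
  have hcard : ∀ w, (D'.filter fun y => ReadBefore x y ∧ T' y = w).card =
      (D.filter fun y => ReadBefore (f x) y ∧ T y = w).card := fun w => by
    refine Finset.card_nbij' f g (fun y hy => ?_) (fun z hz => ?_) (fun y hy => hgf y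
      (Finset.mem_filter.1 hy).1) (fun z hz => hfg z (Finset.mem_filter.1 hz).1)
    · obtain ⟨hyD, hyR, hyw⟩ := Finset.mem_filter.1 hy
      exact Finset.mem_filter.2 ⟨hf y hyD, (hread y hyD).2 hyR, hT y hyD ▸ hyw⟩
    · obtain ⟨hzD, hzR, hzw⟩ := Finset.mem_filter.1 hz
      have hgz := hg z hzD
      refine Finset.mem_filter.2 ⟨hgz, (hread _ hgz).1 (by rwa [hfg z hzD]), ?_⟩
      rw [hT _ hgz, hfg z hzD, hzw]
  rw [hcard, hcard]
  exact hlat _ (hf x hx) v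

def stackShift (n : ℕ) (α : ℕ → ℕ) (a b : ℕ) (x : ℕ × ℕ) : ℕ × ℕ :=
  (x.1, if x.1 < stairLen n α then x.2 - a + b else x.2)

section Shift

variable {n : ℕ} {α : ℕ → ℕ} {a b : ℕ} {P : Diagram}

theorem le_snd_of_mem_stairStack {x : ℕ × ℕ} (hx : x ∈ stairStack n α a P)
    (h : x.1 < stairLen n α) : a ≤ x.2 := by
  obtain ⟨r, c, -, rfl⟩ := mem_shiftD_deltaUp.1 ((mem_stairStack_of_lt h).1 hx)
  exact Nat.le_add_right a c

theorem stackShift_mem {x : ℕ × ℕ} (hx : x ∈ stairStack n α a P) :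
    stackShift n α a b x ∈ stairStack n α b P := by
  rcases lt_or_ge x.1 (stairLen n α) with h | h
  · obtain ⟨r, c, hrc, rfl⟩ := mem_shiftD_deltaUp.1 ((mem_stairStack_of_lt h).1 hx)
    simpa [stackShift, h, add_comm b c] using mk_add_mem_stairStack (off := b) (P := P) hrc
  · refine (mem_stairStack_of_le (x := stackShift n α a b x) h).2 ?_
    simpa [stackShift, not_lt.2 h] using (mem_stairStack_of_le h).1 hx

theorem stackShift_stackShift {x : ℕ × ℕ} (hx : x ∈ stairStack n α a P) :
    stackShift n α b a (stackShift n α a b x) = x := by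
  have := le_snd_of_mem_stairStack hx
  ext
  · rfl
  · by_cases h : x.1 < stairLen n α
    · simp only [stackShift, h, if_true]
      have := this h
      omega
    · simp [stackShift, h]

theorem stackShift_le_stackShift_iff {x y : ℕ × ℕ} (hx : x ∈ stairStack n α a P)
    (hy : y ∈ stairStack n α a P) (hxy : x.1 = y.1) :
    (stackShift n α a b x).2 ≤ (stackShift n α a b y).2 ↔ x.2 ≤ y.2 := by
  by_cases h : x.1 < stairLen n α
  · have := le_snd_of_mem_stairStack hx h
    have := le_snd_of_mem_stairStack hy (hxy ▸ h)
    simp only [stackShift, h, ← hxy, if_true]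
    omega
  · simp [stackShift, h, ← hxy]

theorem stackShift_right {i j : ℕ} (h : (i, j) ∈ stairStack n α a P) :
    stackShift n α a b (i, j + 1) = (i, (stackShift n α a b (i, j)).2 + 1) := by
  by_cases hi : i < stairLen n α
  · have := le_snd_of_mem_stairStack h hi
    simp only [stackShift, hi, if_true, Prod.mk.injEq, true_and]
    omega
  · simp [stackShift, hi]

theorem stackShift_down {i j : ℕ} (hi : i + 1 ≠ stairLen n α) :
    stackShift n α a b (i + 1, j) = (i + 1, (stackShift n α a b (i, j)).2) := by
  by_cases h : i + 1 < stairLen n α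
  · simp [stackShift, h, show i < stairLen n α by omega]
  · simp [stackShift, h, show ¬ i < stairLen n α by omega]

theorem IsLattice.stairStack_shift {T T' : ℕ × ℕ → ℕ} (hlat : IsLattice (stairStack n α a P) T)
    (hT' : ∀ x ∈ stairStack n α b P, T' x = T (stackShift n α b a x)) :
    IsLattice (stairStack n α b P) T' :=
  hlat.of_rowwise_bij _ (stackShift n α a b) (fun _ => stackShift_mem) (fun _ => stackShift_mem)
    (fun _ => stackShift_stackShift) (fun _ => stackShift_stackShift) (fun _ _ => rfl)
    (fun _ hx _ hy => stackShift_le_stackShift_iff hx hy) hT'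

theorem IsSSYT.stairStack_shift {T T' : ℕ × ℕ → ℕ} (hT : IsSSYT (stairStack n α a P) T)
    (hT' : ∀ x ∈ stairStack n α b P, T' x = T (stackShift n α b a x))
    (hjunction : ∀ i j, i + 1 = stairLen n α → (i, j) ∈ stairStack n α b P →
      (i + 1, j) ∈ stairStack n α b P → T' (i, j) < T' (i + 1, j)) :
    IsSSYT (stairStack n α b P) T' := by
  refine ⟨fun x hx => ?_, fun i j h₁ h₂ => ?_, fun i j h₁ h₂ => ?_⟩
  · rw [hT' x hx]
    exact hT.1 _ (stackShift_mem hx)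
  · rw [hT' _ h₁, hT' _ h₂, stackShift_right h₁]
    exact hT.2.1 i _ (stackShift_mem h₁) (stackShift_right h₁ ▸ stackShift_mem h₂)
  · by_cases hi : i + 1 = stairLen n α
    · exact hjunction i j hi h₁ h₂
    · rw [hT' _ h₁, hT' _ h₂, stackShift_down hi]
      exact hT.2.2 i _ (stackShift_mem h₁) (stackShift_down hi ▸ stackShift_mem h₂)

end Shift

def shiftFoundation (n : ℕ) (α : ℕ → ℕ) (m : ℕ) (lam : ℕ → ℕ) (k : ℕ) (T : ℕ × ℕ → ℕ) :
    ℕ × ℕ → ℕ :=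
  fun x => if x ∈ shiftD (deltaUp n α) 0 k then T (x.1, x.2 - k + lam 0)
    else if x ∈ shiftD (partCells m lam) (stairLen n α) 0 then T x else 0

section ShiftFoundation

variable {n : ℕ} {α : ℕ → ℕ} {m : ℕ} {lam : ℕ → ℕ} {k : ℕ} {T : ℕ × ℕ → ℕ}

theorem shiftFoundation_eq {x : ℕ × ℕ} (hx : x ∈ shapeS n α m lam k) :
    shiftFoundation n α m lam k T x = T (stackShift n α k (lam 0) x) := by
  rcases lt_or_ge x.1 (stairLen n α) with h | h
  · simp [shiftFoundation, stackShift, (mem_stairStack_of_lt h).1 hx, h]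
  · have hΔ : x ∉ shiftD (deltaUp n α) 0 k := fun h' =>
      absurd (fst_lt_of_mem_shiftD_deltaUp h') (not_lt.2 h)
    simp [shiftFoundation, stackShift, hΔ, (Finset.mem_union.1 hx).resolve_left hΔ,
      not_lt.2 h]

theorem IsLattice.shiftFoundation_junction (hα : IsComposition n α)
    (hT : IsSSYT (dsumS n α m lam) T) (hlat : IsLattice (dsumS n α m lam) T)
    (hones : ((Finset.range (lam 0)).filter fun j => T (stairLen n α, j) = 1).card ≤ k)
    {i j : ℕ} (hi : i + 1 = stairLen n α) (h₁ : (i, j) ∈ shapeS n α m lam k)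
    (h₂ : (i + 1, j) ∈ shapeS n α m lam k) :
    shiftFoundation n α m lam k T (i, j) < shiftFoundation n α m lam k T (i + 1, j) := by
  obtain ⟨r, c, hrc, hrj⟩ :=
    mem_shiftD_deltaUp.1 ((mem_stairStack_of_lt (x := (i, j)) (by omega)).1 h₁)
  obtain ⟨rfl, rfl⟩ := Prod.mk.inj hrj
  obtain ⟨hm, hc⟩ : 0 < m ∧ k + c < lam 0 := by
    rw [shapeS, ← stairStack, mem_stairStack_of_le (x := (r + 1, k + c)) hi.ge] at h₂
    simpa [hi, mk_zero_mem_partCells] using h₂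
  have hstair := hlat.stair_entry_eq hT hrc
  have hfound := hlat.deltaUpColHt_lt_foundation_entry hα hT hm hones hc
  rw [shiftFoundation_eq h₁, shiftFoundation_eq h₂]
  simp only [stackShift, show r < stairLen n α by omega, if_true, lt_irrefl, hi, if_false,
    Nat.add_sub_cancel_left, add_comm c]
  omega

end ShiftFoundation

theorem shift_foundation_general (n : ℕ) (α : ℕ → ℕ) (hα : IsComposition n α)
    (m : ℕ) (lam : ℕ → ℕ)
    (k : ℕ)
    (T : (ℕ × ℕ) → ℕ)
    (hT : IsSSYT (dsumS n α m lam) T)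
    (hlat : IsLattice (dsumS n α m lam) T)
    (hones : ((Finset.range (lam 0)).filter fun j => T (stairLen n α, j) = 1).card ≤ k) :
    IsSSYT (shapeS n α m lam k)
        (fun x => if x ∈ shiftD (deltaUp n α) 0 k then T (x.1, x.2 - k + lam 0)
          else if x ∈ shiftD (partCells m lam) (stairLen n α) 0 then T x else 0) ∧
      IsLattice (shapeS n α m lam k)
        (fun x => if x ∈ shiftD (deltaUp n α) 0 k then T (x.1, x.2 - k + lam 0)
          else if x ∈ shiftD (partCells m lam) (stairLen n α) 0 then T x else 0) :=
  ⟨hT.stairStack_shift (fun _ => shiftFoundation_eq)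
      fun _ _ hi => hlat.shiftFoundation_junction hα hT hones hi,
    hlat.stairStack_shift fun _ => shiftFoundation_eq⟩

/-- A lattice SSYT of shape `λ ⊕ Δ_α` with at most `k` ones in the
first row of `λ` yields, by shifting the foundation to the right, a lattice SSYT
of shape `S(λ,α;k)`. -/
theorem shift_foundation (n : ℕ) (α : ℕ → ℕ) (hα : IsComposition n α)
    (m : ℕ) (lam : ℕ → ℕ) (hanti : Antitone lam) (hm : ∀ i, m ≤ i → lam i = 0)
    (k : ℕ) (hk : lam 0 ≤ n + k)
    (T : (ℕ × ℕ) → ℕ)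
    (hT : IsSSYT (dsumS n α m lam) T) (hT0 : ∀ x ∉ dsumS n α m lam, T x = 0)
    (hlat : IsLattice (dsumS n α m lam) T)
    (hones : ((Finset.range (lam 0)).filter fun j => T (stairLen n α, j) = 1).card ≤ k) :
    IsSSYT (shapeS n α m lam k)
        (fun x => if x ∈ shiftD (deltaUp n α) 0 k then T (x.1, x.2 - k + lam 0)
          else if x ∈ shiftD (partCells m lam) (stairLen n α) 0 then T x else 0) ∧
      IsLattice (shapeS n α m lam k)
        (fun x => if x ∈ shiftD (deltaUp n α) 0 k then T (x.1, x.2 - k + lam 0)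
          else if x ∈ shiftD (partCells m lam) (stairLen n α) 0 then T x else 0) :=
  shift_foundation_general n α hα m lam k T hT hlat hones

end SchurStair
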